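/- arXiv:2205.06665 — 3 statements merged into one kernel-verified Lean document; each statement's English description precedes it below -/
import Mathlib

section
/- Operational correspondence between the KAM and its HOcore translation: (Forward) if C ->* C' in the KAM, then [[C]] ==tau==> [[C']]. (Backward) if [[C]] ==tau==> P, then there exists a KAM configuration C' such that C ->* C' and one of the following holds: (a) P = [[C']]; or (b) there exists P' with P --tau--> P' and P' = [[C']]; or (c) C' = <\x.t | []> for some x, t and P = hd(x).[[t]] || b!<0>. -/
/-! ### HOcore: syntax, LTS, barbs, barbed bisimilarity -/

/-- Channel names of HOcore. -/
abbrev Name := ℕ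

/-- HOcore processes, with de Bruijn indices for process variables. -/
inductive Proc : Type
  | nil : Proc
  | pvar : ℕ → Proc
  | par : Proc → Proc → Proc
  | inp : Name → Proc → Proc
  | out : Name → Proc → Proc
  deriving DecidableEq

namespace Proc

/-- Shift the free de Bruijn indices `≥ k` by `d`. -/
def lift (d : ℕ) : ℕ → Proc → Proc
  | _, nil => nil
  | k, pvar n => if n < k then pvar n else pvar (n + d)
  | k, par P Q => par (lift d k P) (lift d k Q)
  | k, inp a P => inp a (lift d (k + 1) P)
  | k, out a P => out a (lift d k P)

/-- Capture-avoiding substitution of `S` for the de Bruijn index `k` in `P`. -/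
def subst : Proc → ℕ → Proc → Proc
  | nil, _, _ => nil
  | pvar n, k, S => if n = k then lift k 0 S else if k < n then pvar (n - 1) else pvar n
  | par P Q, k, S => par (subst P k S) (subst Q k S)
  | inp a P, k, S => inp a (subst P (k + 1) S)
  | out a P, k, S => out a (subst P k S)

/-- Free channel names of a process. -/
def fnames : Proc → Finset Name
  | nil => ∅
  | pvar _ => ∅
  | par P Q => fnames P ∪ fnames Q
  | inp a P => insert a (fnames P)
  | out a P => insert a (fnames P)

end Proc

/-- Labels of the HOcore LTS: internal step, output, input. -/
inductive Label
  | tau : Label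
  | outl : Name → Proc → Label
  | inl : Name → Proc → Label

/-- Structural congruence: parallel composition is associative, commutative,
and has `nil` as a neutral element. -/
inductive SCong : Proc → Proc → Prop
  | refl (P) : SCong P P
  | symm {P Q} : SCong P Q → SCong Q P
  | trans {P Q R} : SCong P Q → SCong Q R → SCong P R
  | parComm (P Q) : SCong (.par P Q) (.par Q P)
  | parAssoc (P Q R) : SCong (.par (.par P Q) R) (.par P (.par Q R))
  | parNil (P) : SCong (.par P .nil) P
  | parCong {P P' Q Q'} : SCong P P' → SCong Q Q' → SCong (.par P Q) (.par P' Q')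
  | inpCong {P P'} (a) : SCong P P' → SCong (.inp a P) (.inp a P')
  | outCong {P P'} (a) : SCong P P' → SCong (.out a P) (.out a P')

/-- The labeled transition system of HOcore (processes are considered up to
structural congruence). -/
inductive Step : Proc → Label → Proc → Prop
  | outS (a P) : Step (.out a P) (.outl a P) .nil
  | inpS (a Q P) : Step (.inp a Q) (.inl a P) (Q.subst 0 P)
  | parL {P l P'} (Q) : Step P l P' → Step (.par P Q) l (.par P' Q)
  | parR {Q l Q'} (P) : Step Q l Q' → Step (.par P Q) l (.par P Q')
  | comm1 {P Q P' Q' a R} : Step P (.outl a R) P' → Step Q (.inl a R) Q' →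
      Step (.par P Q) .tau (.par P' Q')
  | comm2 {P Q P' Q' a R} : Step P (.inl a R) P' → Step Q (.outl a R) Q' →
      Step (.par P Q) .tau (.par P' Q')
  | struct {P P' l Q Q'} : SCong P P' → Step P' l Q' → SCong Q' Q → Step P l Q

/-- One internal step. -/
def TauStep (P Q : Proc) : Prop := Step P Label.tau Q

/-- Weak internal transition `==tau==>`. -/
def WTau : Proc → Proc → Prop := Relation.ReflTransGen TauStep

/-- Observables: input on a name, or output on a name (a coname). -/
inductive Barb
  | inb : Name → Barb
  | outb : Name → Barb
  deriving DecidableEq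

/-- Strong observable action w.r.t. a set `H` of hidden names. -/
def StrongBarb (H : Set Name) (P : Proc) : Barb → Prop
  | .inb a => a ∉ H ∧ ∃ Q R, Step P (Label.inl a Q) R
  | .outb a => a ∉ H ∧ ∃ Q R, Step P (Label.outl a Q) R

/-- Weak observable action w.r.t. a set `H` of hidden names. -/
def WeakBarb (H : Set Name) (P : Proc) (α : Barb) : Prop :=
  ∃ P', WTau P P' ∧ StrongBarb H P' α

/-- Barbed bisimulation w.r.t. the hidden names `H`. -/
def IsBarbedBisim (H : Set Name) (R : Proc → Proc → Prop) : Prop :=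
  Symmetric R ∧ ∀ P Q, R P Q →
    (∀ α, StrongBarb H P α → WeakBarb H Q α) ∧
    (∀ S : Proc, ((S.fnames : Set Name) ∩ H = ∅) → R (.par P S) (.par Q S)) ∧
    (∀ P', Step P Label.tau P' → ∃ Q', WTau Q Q' ∧ R P' Q')

/-- Barbed equivalence w.r.t. the hidden names `H`. -/
def BarbedEquiv (H : Set Name) (P Q : Proc) : Prop :=
  ∃ R, IsBarbedBisim H R ∧ R P Q
/-! ### Closed call-by-name lambda-calculus and the KAM -/

/-- Lambda-terms with de Bruijn indices. -/
inductive Tm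
  | bvar : ℕ → Tm
  | lam : Tm → Tm
  | app : Tm → Tm → Tm
  deriving DecidableEq

namespace Tm

/-- Shift the free de Bruijn indices `≥ k` by `d`. -/
def liftT (d : ℕ) : ℕ → Tm → Tm
  | k, bvar n => if n < k then bvar n else bvar (n + d)
  | k, lam t => lam (liftT d (k + 1) t)
  | k, app t s => app (liftT d k t) (liftT d k s)

/-- Capture-avoiding substitution of `s` for the de Bruijn index `k`. -/
def substT : Tm → ℕ → Tm → Tm
  | bvar n, k, s => if n = k then liftT k 0 s else if k < n then bvar (n - 1) else bvar n
  | lam t, k, s => lam (substT t (k + 1) s)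
  | app t u, k, s => app (substT t k s) (substT u k s)

/-- All de Bruijn indices point to one of the `k` enclosing binders. -/
def ClosedUnder : ℕ → Tm → Prop
  | k, bvar n => n < k
  | k, lam t => ClosedUnder (k + 1) t
  | k, app t s => ClosedUnder k t ∧ ClosedUnder k s

/-- Closed terms. -/
def Closed (t : Tm) : Prop := ClosedUnder 0 t

end Tm

/-- Stacks of the KAM. -/
inductive Stk
  | nil : Stk
  | cons : Tm → Stk → Stk

/-- Configurations of the KAM. -/
structure KConf where
  t : Tm
  π : Stk

/-- Transitions of the KAM. -/
inductive KStep : KConf → KConf → Prop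
  | push {t s π} : KStep ⟨.app t s, π⟩ ⟨t, .cons s π⟩
  | grab {t s π} : KStep ⟨.lam t, .cons s π⟩ ⟨t.substT 0 s, π⟩

/-- Reflexive-transitive closure of the KAM transitions. -/
def KSteps : KConf → KConf → Prop := Relation.ReflTransGen KStep

def StkClosed : Stk → Prop
  | .nil => True
  | .cons t π => t.Closed ∧ StkClosed π

/-- A KAM configuration evaluating a closed term within a stack of closed terms. -/
def KConfClosed (C : KConf) : Prop := C.t.Closed ∧ StkClosed C.π
/-! ### Translation of the KAM into HOcore -/

def hdN : Name := 0
def cN : Name := 1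
def bN : Name := 2

/-- Translation of lambda-terms into HOcore. -/
def trT : Tm → Proc
  | .bvar n => .pvar n
  | .app t s =>
      .inp cN (.par ((trT t).lift 1 0)
        (.out cN (.par (.out hdN ((trT s).lift 1 0)) (.out cN (.pvar 0)))))
  | .lam t => .inp cN (.par (.inp hdN ((trT t).lift 1 1)) (.pvar 0))

/-- Translation of KAM stacks. -/
def trStk : Stk → Proc
  | .nil => .out bN .nil
  | .cons t π => .par (.out hdN (trT t)) (.out cN (trStk π))

/-- Translation of KAM configurations. -/
def trConf (C : KConf) : Proc := .par (trT C.t) (.out cN (trStk C.π))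

/-!
A Push of the KAM is simulated by one communication on `c`, a Grab by two: `[[λt]]` first
receives the stack on `c`, then its argument on `hd`; since the translation commutes with
substitution, the Grab lands exactly on the translation of the next configuration. Conversely,
up to structural congruence the translated configurations and these intermediate Grab states have
no τ-steps but the ones above, so every τ-path from `[[C]]` stays among them. Structural
congruence is handled through the LTS without the structural rule, for which it is a strong
bisimulation.
-/

namespace Proc

theorem lift_zero : ∀ (k : ℕ) (P : Proc), lift 0 k P = P
  | _, nil => rfl
  | k, pvar n => by simp [lift]
  | k, par P Q => by simp [lift, lift_zero k P, lift_zero k Q]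
  | k, inp a P => by simp [lift, lift_zero (k + 1) P]
  | k, out a P => by simp [lift, lift_zero k P]

theorem lift_lift_of_le : ∀ (P : Proc) {d k k' j : ℕ}, j ≤ k' → k' ≤ k + j →
    lift d k' (lift k j P) = lift (k + d) j P
  | nil, _, _, _, _, _, _ => rfl
  | pvar n, d, k, k', j, h₁, h₂ => by
      by_cases hn : n < j
      · simp [lift, hn, show n < k' by omega]
      · simp only [lift, if_neg hn, if_neg (show ¬ n + k < k' by omega)]
        congr 1; omega
  | par P Q, _, _, _, _, h₁, h₂ => by
      simp [lift, lift_lift_of_le P h₁ h₂, lift_lift_of_le Q h₁ h₂]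
  | inp a P, _, k, _, j, h₁, h₂ => by
      simp [lift, lift_lift_of_le P (k := k) (j := j + 1) (Nat.succ_le_succ h₁) (by omega)]
  | out a P, _, _, _, _, h₁, h₂ => by simp [lift, lift_lift_of_le P h₁ h₂]

theorem lift_lift_comm : ∀ (P : Proc) {d d' k k' : ℕ}, k' ≤ k →
    lift d (k + d') (lift d' k' P) = lift d' k' (lift d k P)
  | nil, _, _, _, _, _ => rfl
  | pvar n, d, d', k, k', h => by
      by_cases h₁ : n < k'
      · simp [lift, h₁, show n < k by omega, show n < k + d' by omega]
      · by_cases h₂ : n < k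
        · simp [lift, h₁, h₂]
        · simp only [lift, if_neg h₁, if_neg h₂, if_neg (show ¬ n + d' < k + d' by omega),
            if_neg (show ¬ n + d < k' by omega)]
          congr 1; omega
  | par P Q, _, _, _, _, h => by simp [lift, lift_lift_comm P h, lift_lift_comm Q h]
  | inp a P, d, d', k, k', h => by
      simp only [lift]
      rw [show k + d' + 1 = k + 1 + d' by omega, lift_lift_comm P (Nat.succ_le_succ h)]
  | out a P, _, _, _, _, h => by simp [lift, lift_lift_comm P h]

theorem subst_lift_one : ∀ (P : Proc) (k : ℕ) (S : Proc), (lift 1 k P).subst k S = P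
  | nil, _, _ => rfl
  | pvar n, k, S => by
      by_cases h : n < k
      · simp [lift, subst, h, show n ≠ k by omega, show ¬ k < n by omega]
      · simp [lift, subst, h, show n + 1 ≠ k by omega, show k < n + 1 by omega]
  | par P Q, k, S => by simp [lift, subst, subst_lift_one P k S, subst_lift_one Q k S]
  | inp a P, k, S => by simp [lift, subst, subst_lift_one P (k + 1) S]
  | out a P, k, S => by simp [lift, subst, subst_lift_one P k S]

theorem subst_lift_of_le : ∀ (P : Proc) {d k k' : ℕ} (S : Proc), k' ≤ k →
    (lift d k' P).subst (k + d) S = lift d k' (P.subst k S)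
  | nil, _, _, _, _, _ => rfl
  | pvar n, d, k, k', S, h => by
      by_cases h₁ : n < k'
      · simp [lift, subst, h₁, show n ≠ k + d by omega, show ¬ k + d < n by omega,
          show n ≠ k by omega, show ¬ k < n by omega]
      · rcases lt_trichotomy n k with h₂ | rfl | h₂
        · simp [lift, subst, h₁, show n ≠ k by omega, show ¬ k < n by omega]
        · simp only [lift, subst, if_neg h₁]
          exact (lift_lift_of_le S (Nat.zero_le _) (by omega)).symm
        · simp only [lift, subst, if_neg h₁, if_neg (show n + d ≠ k + d by omega),
            if_pos (show k + d < n + d by omega), if_neg (show n ≠ k by omega), if_pos h₂,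
            if_neg (show ¬ n - 1 < k' by omega)]
          congr 1; omega
  | par P Q, _, _, _, S, h => by simp [lift, subst, subst_lift_of_le P S h, subst_lift_of_le Q S h]
  | inp a P, d, k, k', S, h => by
      simp only [lift, subst]
      rw [show k + d + 1 = k + 1 + d by omega, subst_lift_of_le P S (Nat.succ_le_succ h)]
  | out a P, _, _, _, S, h => by simp [lift, subst, subst_lift_of_le P S h]

end Proc

namespace Tm

theorem ClosedUnder.mono : ∀ {t : Tm} {i k : ℕ}, t.ClosedUnder i → i ≤ k → t.ClosedUnder k
  | bvar _, _, _, ht, h => Nat.lt_of_lt_of_le ht h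
  | lam t, i, k, ht, h => mono (t := t) (i := i + 1) (k := k + 1) ht (Nat.succ_le_succ h)
  | app _ _, _, _, ht, h => ⟨ht.1.mono h, ht.2.mono h⟩

theorem liftT_eq_self : ∀ {t : Tm} {k : ℕ} (d : ℕ), t.ClosedUnder k → t.liftT d k = t
  | bvar n, _, _, ht => by simp [liftT, show n < _ from ht]
  | lam t, k, d, ht => by simp [liftT, liftT_eq_self (t := t) (k := k + 1) d ht]
  | app _ _, _, d, ht => by simp [liftT, liftT_eq_self d ht.1, liftT_eq_self d ht.2]

theorem ClosedUnder.substT : ∀ {t : Tm} {k : ℕ} {s : Tm}, t.ClosedUnder (k + 1) → s.Closed →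
    (t.substT k s).ClosedUnder k
  | bvar n, k, s, ht, hs => by
      by_cases h : n = k
      · subst h
        simpa [Tm.substT, liftT_eq_self n hs] using hs.mono (Nat.zero_le n)
      · simp only [ClosedUnder] at ht
        simp [Tm.substT, h, show ¬ k < n by omega, ClosedUnder]
        omega
  | lam t, k, _, ht, hs => ClosedUnder.substT (t := t) (k := k + 1) ht hs
  | app _ _, _, _, ht, hs => ⟨ht.1.substT hs, ht.2.substT hs⟩

end Tm

theorem trT_liftT : ∀ (t : Tm) (d k : ℕ), trT (t.liftT d k) = (trT t).lift d k
  | .bvar n, d, k => by by_cases h : n < k <;> simp [Tm.liftT, trT, Proc.lift, h]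
  | .app t s, d, k => by
      simp [Tm.liftT, trT, Proc.lift, trT_liftT t d k, trT_liftT s d k,
        Proc.lift_lift_comm _ (Nat.zero_le k)]
  | .lam t, d, k => by
      simp [Tm.liftT, trT, Proc.lift, trT_liftT t d (k + 1),
        Proc.lift_lift_comm _ (Nat.succ_le_succ (Nat.zero_le k))]

theorem trT_substT : ∀ (t : Tm) (k : ℕ) (s : Tm), trT (t.substT k s) = (trT t).subst k (trT s)
  | .bvar n, k, s => by
      by_cases h₁ : n = k
      · subst h₁; simp [Tm.substT, trT, Proc.subst, trT_liftT]
      · by_cases h₂ : k < n <;> simp [Tm.substT, trT, Proc.subst, h₁, h₂]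
  | .app t u, k, s => by
      simp [Tm.substT, trT, Proc.subst, trT_substT t k s, trT_substT u k s,
        Proc.subst_lift_of_le _ _ (Nat.zero_le k)]
  | .lam t, k, s => by
      simp [Tm.substT, trT, Proc.subst, trT_substT t (k + 1) s,
        Proc.subst_lift_of_le _ _ (Nat.succ_le_succ (Nat.zero_le k))]

theorem lift_trT_eq_self {t : Tm} {k : ℕ} (d : ℕ) (ht : t.ClosedUnder k) :
    (trT t).lift d k = trT t := by
  rw [← trT_liftT, Tm.liftT_eq_self d ht]

theorem KStep.closed {C C' : KConf} (h : KStep C C') (hC : KConfClosed C) : KConfClosed C' := by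
  obtain ⟨ht, hπ⟩ := hC
  cases h with
  | push => exact ⟨ht.1, ht.2, hπ⟩
  | grab => exact ⟨Tm.ClosedUnder.substT ht hπ.1, hπ.2⟩

theorem KSteps.closed {C C' : KConf} (h : KSteps C C') (hC : KConfClosed C) : KConfClosed C' := by
  induction h with
  | refl => exact hC
  | tail _ hs ih => exact hs.closed ih

theorem SCong.subst {P Q : Proc} (h : SCong P Q) (k : ℕ) (S : Proc) :
    SCong (P.subst k S) (Q.subst k S) := by
  induction h generalizing k with
  | refl => exact .refl _
  | symm _ ih => exact (ih k).symm
  | trans _ _ ih₁ ih₂ => exact (ih₁ k).trans (ih₂ k)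
  | parComm => exact .parComm _ _
  | parAssoc => exact .parAssoc _ _ _
  | parNil => exact .parNil _
  | parCong _ _ ih₁ ih₂ => exact .parCong (ih₁ k) (ih₂ k)
  | inpCong a _ ih => exact .inpCong a (ih (k + 1))
  | outCong a _ ih => exact .outCong a (ih k)

theorem SCong.lift {P Q : Proc} (h : SCong P Q) (d k : ℕ) : SCong (P.lift d k) (Q.lift d k) := by
  induction h generalizing k with
  | refl => exact .refl _
  | symm _ ih => exact (ih k).symm
  | trans _ _ ih₁ ih₂ => exact (ih₁ k).trans (ih₂ k)
  | parComm => exact .parComm _ _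
  | parAssoc => exact .parAssoc _ _ _
  | parNil => exact .parNil _
  | parCong _ _ ih₁ ih₂ => exact .parCong (ih₁ k) (ih₂ k)
  | inpCong a _ ih => exact .inpCong a (ih (k + 1))
  | outCong a _ ih => exact .outCong a (ih k)

theorem SCong.subst_right {S S' : Proc} (h : SCong S S') :
    ∀ (P : Proc) (k : ℕ), SCong (P.subst k S) (P.subst k S')
  | .nil, _ => .refl _
  | .pvar n, k => by
      by_cases h₁ : n = k
      · simpa [Proc.subst, h₁] using h.lift k 0
      · by_cases h₂ : k < n <;> simpa [Proc.subst, h₁, h₂] using .refl _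
  | .par P Q, k => .parCong (h.subst_right P k) (h.subst_right Q k)
  | .inp a P, k => .inpCong a (h.subst_right P (k + 1))
  | .out a P, k => .outCong a (h.subst_right P k)

theorem SCong.nil_par (P : Proc) : SCong (.par .nil P) P := (parComm _ _).trans (parNil _)

/-- `Step` without its structural rule. Output labels are read up to `SCong`, so that `SCong`
becomes a strong bisimulation for `SStep` with identical labels. -/
inductive SStep : Proc → Label → Proc → Prop
  | out {a P P'} : SCong P P' → SStep (.out a P) (.outl a P') .nil
  | inp (a Q P) : SStep (.inp a Q) (.inl a P) (Q.subst 0 P)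
  | parL {P l P'} (Q) : SStep P l P' → SStep (.par P Q) l (.par P' Q)
  | parR {Q l Q'} (P) : SStep Q l Q' → SStep (.par P Q) l (.par P Q')
  | comm1 {P Q P' Q' a R} : SStep P (.outl a R) P' → SStep Q (.inl a R) Q' →
      SStep (.par P Q) .tau (.par P' Q')
  | comm2 {P Q P' Q' a R} : SStep P (.inl a R) P' → SStep Q (.outl a R) Q' →
      SStep (.par P Q) .tau (.par P' Q')

theorem SStep.step {P Q : Proc} {l : Label} (h : SStep P l Q) : Step P l Q := by
  induction h with
  | out h => exact .struct (.outCong _ h) (.outS _ _) (.refl _)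
  | inp a Q P => exact .inpS a Q P
  | parL Q _ ih => exact .parL Q ih
  | parR P _ ih => exact .parR P ih
  | comm1 _ _ ih₁ ih₂ => exact .comm1 ih₁ ih₂
  | comm2 _ _ ih₁ ih₂ => exact .comm2 ih₁ ih₂

def Simulates (P Q : Proc) : Prop :=
  ∀ ⦃l P'⦄, SStep P l P' → ∃ Q', SStep Q l Q' ∧ SCong P' Q'

namespace Simulates

theorem refl (P : Proc) : Simulates P P := fun _ P' h => ⟨P', h, .refl _⟩

theorem trans {P Q R : Proc} (h₁ : Simulates P Q) (h₂ : Simulates Q R) : Simulates P R := by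
  intro l P' h
  obtain ⟨Q', hQ, hPQ⟩ := h₁ h
  obtain ⟨R', hR, hQR⟩ := h₂ hQ
  exact ⟨R', hR, hPQ.trans hQR⟩

theorem par_comm (P Q : Proc) : Simulates (.par P Q) (.par Q P) := by
  intro l X h
  cases h with
  | parL _ h => exact ⟨_, .parR _ h, .parComm _ _⟩
  | parR _ h => exact ⟨_, .parL _ h, .parComm _ _⟩
  | comm1 h₁ h₂ => exact ⟨_, .comm2 h₂ h₁, .parComm _ _⟩
  | comm2 h₁ h₂ => exact ⟨_, .comm1 h₂ h₁, .parComm _ _⟩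

theorem par_assoc (P Q R : Proc) : Simulates (.par (.par P Q) R) (.par P (.par Q R)) := by
  intro l X h
  cases h <;> try cases ‹SStep (.par P Q) _ _›
  all_goals exact ⟨_, by solve_by_elim only [SStep.parL, SStep.parR, SStep.comm1, SStep.comm2, *],
    .parAssoc _ _ _⟩

theorem par_assoc_symm (P Q R : Proc) : Simulates (.par P (.par Q R)) (.par (.par P Q) R) := by
  intro l X h
  cases h <;> try cases ‹SStep (.par Q R) _ _›
  all_goals exact ⟨_, by solve_by_elim only [SStep.parL, SStep.parR, SStep.comm1, SStep.comm2, *],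
    (SCong.parAssoc _ _ _).symm⟩

theorem par_nil (P : Proc) : Simulates (.par P .nil) P := by
  intro l X h
  cases h with
  | parL _ h => exact ⟨_, h, .parNil _⟩
  | parR _ h | comm1 _ h | comm2 _ h => cases h

theorem nil_par (P : Proc) : Simulates P (.par P .nil) :=
  fun _ _ h => ⟨_, .parL _ h, (SCong.parNil _).symm⟩

theorem par {P P' Q Q' : Proc} (hP : SCong P P') (hQ : SCong Q Q') (h₁ : Simulates P P')
    (h₂ : Simulates Q Q') : Simulates (.par P Q) (.par P' Q') := by
  intro l X h
  cases h with
  | parL _ h =>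
      obtain ⟨X', h, hX⟩ := h₁ h
      exact ⟨_, .parL _ h, .parCong hX hQ⟩
  | parR _ h =>
      obtain ⟨X', h, hX⟩ := h₂ h
      exact ⟨_, .parR _ h, .parCong hP hX⟩
  | comm1 h h' =>
      obtain ⟨X, h, hX⟩ := h₁ h
      obtain ⟨Y, h', hY⟩ := h₂ h'
      exact ⟨_, .comm1 h h', .parCong hX hY⟩
  | comm2 h h' =>
      obtain ⟨X, h, hX⟩ := h₁ h
      obtain ⟨Y, h', hY⟩ := h₂ h'
      exact ⟨_, .comm2 h h', .parCong hX hY⟩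

theorem inp {P P' : Proc} (a : Name) (h : SCong P P') : Simulates (.inp a P) (.inp a P') := by
  rintro l X ⟨⟩
  exact ⟨_, .inp _ _ _, h.subst 0 _⟩

theorem out {P P' : Proc} (a : Name) (h : SCong P P') : Simulates (.out a P) (.out a P') := by
  rintro l X ⟨hX⟩
  exact ⟨_, .out (h.symm.trans hX), .refl _⟩

end Simulates

theorem SCong.simulates {P Q : Proc} (h : SCong P Q) : Simulates P Q ∧ Simulates Q P := by
  induction h with
  | refl P => exact ⟨.refl P, .refl P⟩
  | symm _ ih => exact ih.symm
  | trans _ _ ih₁ ih₂ => exact ⟨ih₁.1.trans ih₂.1, ih₂.2.trans ih₁.2⟩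
  | parComm P Q => exact ⟨.par_comm P Q, .par_comm Q P⟩
  | parAssoc P Q R => exact ⟨.par_assoc P Q R, .par_assoc_symm P Q R⟩
  | parNil P => exact ⟨.par_nil P, .nil_par P⟩
  | parCong hP hQ ih₁ ih₂ =>
      exact ⟨.par hP hQ ih₁.1 ih₂.1, .par hP.symm hQ.symm ih₁.2 ih₂.2⟩
  | inpCong a h => exact ⟨.inp a h, .inp a h.symm⟩
  | outCong a h => exact ⟨.out a h, .out a h.symm⟩

theorem Step.exists_sstep {P Q : Proc} {l : Label} (h : Step P l Q) :
    ∃ Q', SStep P l Q' ∧ SCong Q' Q := by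
  induction h with
  | outS a P => exact ⟨_, .out (.refl P), .refl _⟩
  | inpS a Q P => exact ⟨_, .inp a Q P, .refl _⟩
  | parL Q _ ih =>
      obtain ⟨P', h, hP⟩ := ih
      exact ⟨_, .parL Q h, .parCong hP (.refl Q)⟩
  | parR P _ ih =>
      obtain ⟨Q', h, hQ⟩ := ih
      exact ⟨_, .parR P h, .parCong (.refl P) hQ⟩
  | comm1 _ _ ih₁ ih₂ =>
      obtain ⟨P', h₁, hP⟩ := ih₁
      obtain ⟨Q', h₂, hQ⟩ := ih₂
      exact ⟨_, .comm1 h₁ h₂, .parCong hP hQ⟩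
  | comm2 _ _ ih₁ ih₂ =>
      obtain ⟨P', h₁, hP⟩ := ih₁
      obtain ⟨Q', h₂, hQ⟩ := ih₂
      exact ⟨_, .comm2 h₁ h₂, .parCong hP hQ⟩
  | struct hP _ hQ ih =>
      obtain ⟨Q₁, h, hQ₁⟩ := ih
      obtain ⟨Q₂, h, hQ₂⟩ := hP.simulates.2 h
      exact ⟨Q₂, h, hQ₂.symm.trans (hQ₁.trans hQ)⟩

theorem TauStep.inp_par_out (a : Name) (Q S : Proc) :
    TauStep (.par (.inp a Q) (.out a S)) (Q.subst 0 S) :=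
  .struct (.refl _) (SStep.comm2 (.inp a Q S) (.out (.refl S))).step (.parNil _)

theorem SStep.tau_inp_par_out {a : Name} {Q S X : Proc}
    (h : SStep (.par (.inp a Q) (.out a S)) .tau X) : SCong X (Q.subst 0 S) := by
  cases h with
  | parL _ h | parR _ h | comm1 h => cases h
  | comm2 hin hout =>
      cases hin
      cases hout with
      | out hS => exact (SCong.parNil _).trans (hS.symm.subst_right Q 0)

theorem trConf_app_eq (t s : Tm) (π : Stk) : ∃ B, trConf ⟨.app t s, π⟩ =
    .par (.inp cN B) (.out cN (trStk π)) ∧ B.subst 0 (trStk π) = trConf ⟨t, .cons s π⟩ :=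
  ⟨_, rfl, by simp [trConf, trStk, Proc.subst, Proc.subst_lift_one, Proc.lift_zero]⟩

theorem trConf_lam_eq (t : Tm) (π : Stk) : ∃ B, trConf ⟨.lam t, π⟩ =
    .par (.inp cN B) (.out cN (trStk π)) ∧
      B.subst 0 (trStk π) = .par (.inp hdN (trT t)) (trStk π) :=
  ⟨_, rfl, by simp [Proc.subst, Proc.subst_lift_one, Proc.lift_zero]⟩

theorem tauStep_grab (t s : Tm) (π : Stk) :
    TauStep (.par (.inp hdN (trT t)) (trStk (.cons s π))) (trConf ⟨t.substT 0 s, π⟩) := by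
  refine .struct (.refl _) (SStep.comm2 (.inp hdN _ (trT s)) (.parL _ (.out (.refl _)))).step ?_
  rw [trConf, trT_substT]
  exact .parCong (.refl _) (.nil_par _)

theorem KStep.wtau_trConf {C C' : KConf} (h : KStep C C') : WTau (trConf C) (trConf C') := by
  cases h with
  | @push t s π =>
      obtain ⟨B, hC, hB⟩ := trConf_app_eq t s π
      rw [hC, ← hB]
      exact .single (.inp_par_out _ _ _)
  | @grab t s π =>
      obtain ⟨B, hC, hB⟩ := trConf_lam_eq t (.cons s π)
      rw [hC]
      exact .head (hB ▸ .inp_par_out _ _ _) (.single (tauStep_grab t s π))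

theorem KSteps.wtau_trConf {C C' : KConf} (h : KSteps C C') : WTau (trConf C) (trConf C') := by
  induction h with
  | refl => exact .refl
  | tail _ hs ih => exact ih.trans hs.wtau_trConf

/-- The processes met on a τ-path from a translated configuration: besides `[[C]]` itself, the
state of a Grab in which `[[λt]]` has already received the stack `π` but not yet its argument. -/
inductive Represents : KConf → Proc → Prop
  | conf (C : KConf) : Represents C (trConf C)
  | lam (t : Tm) (π : Stk) : Represents ⟨.lam t, π⟩ (.par (.inp hdN (trT t)) (trStk π))

theorem Represents.exists_of_sstep_tau {C : KConf} {P P' : Proc} (h : Represents C P)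
    (hs : SStep P .tau P') :
    ∃ C' Q, Relation.ReflGen KStep C C' ∧ Represents C' Q ∧ SCong P' Q := by
  rcases h with ⟨_ | t | ⟨t, s⟩, π⟩ | ⟨t, _ | ⟨s, π⟩⟩
  · cases hs with
    | parL _ h | parR _ h | comm1 h | comm2 h => cases h
  · obtain ⟨B, hC, hB⟩ := trConf_lam_eq t π
    rw [hC] at hs
    exact ⟨_, _, .refl, .lam t π, hB ▸ hs.tau_inp_par_out⟩
  · obtain ⟨B, hC, hB⟩ := trConf_app_eq t s π
    rw [hC] at hs
    exact ⟨_, _, .single .push, .conf _, hB ▸ hs.tau_inp_par_out⟩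
  · cases hs with
    | parL _ h | parR _ h | comm1 h => cases h
    | comm2 h h' => cases h; cases h'
  · cases hs with
    | parL _ h | comm1 h => cases h
    | comm2 hin hout =>
        cases hin
        cases hout with
        | parR _ h => cases h
        | parL _ h =>
            cases h with
            | out hR =>
                refine ⟨_, _, .single .grab, .conf _, ?_⟩
                rw [trConf, trT_substT]
                exact .parCong (hR.symm.subst_right _ 0) (.nil_par _)
    | parR _ h =>
        cases h with
        | parL _ h | parR _ h | comm1 _ h | comm2 h => cases h

theorem WTau.exists_represents {C : KConf} {P : Proc} (h : WTau (trConf C) P) :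
    ∃ C' Q, KSteps C C' ∧ Represents C' Q ∧ SCong P Q := by
  induction h with
  | refl => exact ⟨C, _, .refl, .conf C, .refl _⟩
  | tail _ hs ih =>
      obtain ⟨C', Q, hCC', hQ, hPQ⟩ := ih
      obtain ⟨P₁, hP₁, hP₁P'⟩ := Step.exists_sstep hs
      obtain ⟨Q₁, hQ₁, hP₁Q₁⟩ := hPQ.simulates.1 hP₁
      obtain ⟨C'', Q₂, hC'C'', hQ₂, hQ₁Q₂⟩ := hQ.exists_of_sstep_tau hQ₁
      exact ⟨C'', Q₂, hCC'.trans hC'C''.to_reflTransGen, hQ₂,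
        hP₁P'.symm.trans (hP₁Q₁.trans hQ₁Q₂)⟩

/-- Theorem (operational correspondence).  Forward: if `C ->* C'` in the KAM then
`[[C]] ==tau==> [[C']]`.  Backward: if `[[C]] ==tau==> P` then there is a KAM
configuration `C'` with `C ->* C'` and either `P = [[C']]`, or `P --tau--> P' = [[C']]`
for some `P'`, or `C' = <\x.t | []>` and `P = hd(x).[[t]] || b!<0>`
(processes are considered up to structural congruence). -/
theorem kam_operational_correspondence :
    (∀ C C' : KConf, KConfClosed C → KSteps C C' → WTau (trConf C) (trConf C')) ∧
    (∀ (C : KConf) (P : Proc), KConfClosed C → WTau (trConf C) P →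
      ∃ C' : KConf, KSteps C C' ∧
        (SCong P (trConf C') ∨
         (∃ P', Step P Label.tau P' ∧ SCong P' (trConf C')) ∨
         (∃ t : Tm, C' = ⟨.lam t, .nil⟩ ∧
           SCong P (.par (.inp hdN ((trT t).lift 1 1)) (.out bN .nil))))) := by
  refine ⟨fun C C' _ h => h.wtau_trConf, fun C P hC hP => ?_⟩
  obtain ⟨C', Q, hCC', hQ, hPQ⟩ := hP.exists_represents
  rcases hQ with C' | ⟨t, _ | ⟨s, π⟩⟩
  · exact ⟨C', hCC', .inl hPQ⟩
  · have ht : t.ClosedUnder 1 := (hCC'.closed hC).1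
    exact ⟨_, hCC', .inr (.inr ⟨t, rfl, by rwa [lift_trT_eq_self 1 ht]⟩)⟩
  · exact ⟨_, hCC'.tail .grab,
      .inr (.inl ⟨_, .struct hPQ (tauStep_grab t s π) (.refl _), .refl _⟩)⟩
end

section
/- Every closed de Bruijn term can be generated by the AB machine with its canonical flag sequence: for every closed term t' and every closure (t, e), the AB machine admits the run <0 | <> | (t, e)>_ind -Seq(t')-> <t | (t',<>)::e | []>. -/
/-! ### The environment-based KAM and the AB machine (de Bruijn indices) -/

/-- Lambda-terms with de Bruijn indices. -/
inductive DTm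
  | var : ℕ → DTm
  | lam : DTm → DTm
  | app : DTm → DTm → DTm
  deriving DecidableEq

/-- Closures: a term together with an environment (a list of closures). -/
inductive Clos
  | mk : DTm → List Clos → Clos

/-- All de Bruijn indices point below `k`. -/
def DClosedUnder : ℕ → DTm → Prop
  | k, .var n => n < k
  | k, .lam t => DClosedUnder (k + 1) t
  | k, .app t s => DClosedUnder k t ∧ DClosedUnder k s

/-- Closed closures: the environment has more elements than the highest free
de Bruijn index of the term, and consists only of closed closures. -/
inductive ClosClosed : Clos → Prop
  | mk {t : DTm} {e : List Clos} :
      DClosedUnder e.length t → (∀ γ ∈ e, ClosClosed γ) → ClosClosed (.mk t e)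

/-- Configurations of the AB machine: evaluation mode `<t | e | π>`,
index mode `<n | ρ | γ>_ind, and term mode `<t | m | ρ | γ>_tm`. -/
inductive ABConf
  | ev : DTm → List Clos → List Clos → ABConf
  | ind : ℕ → List (DTm × ℕ) → Clos → ABConf
  | tm : DTm → ℕ → List (DTm × ℕ) → Clos → ABConf

/-- Flags of the AB machine. -/
inductive ABFlag
  | arg | suc | var | lam | appfun | app | done
  deriving DecidableEq

/-- Labels of the AB machine. -/
inductive ABLabel
  | tau : ABLabel
  | flag : ABFlag → ABLabel

/-- Transitions of the AB machine. -/
inductive ABStep : ABConf → ABLabel → ABConf → Prop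
  | push {t s e π} : ABStep (.ev (.app t s) e π) .tau (.ev t e (.mk s e :: π))
  | zero {t e e' π} : ABStep (.ev (.var 0) (.mk t e :: e') π) .tau (.ev t e π)
  | env {n γ e π} : ABStep (.ev (.var (n + 1)) (γ :: e) π) .tau (.ev (.var n) e π)
  | grab {t e γ π} : ABStep (.ev (.lam t) e (γ :: π)) .tau (.ev t (γ :: e) π)
  | arg {t e} : ABStep (.ev (.lam t) e []) (.flag .arg) (.ind 0 [] (.mk t e))
  | suc {n ρ γ} : ABStep (.ind n ρ γ) (.flag .suc) (.ind (n + 1) ρ γ)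
  | var {n ρ γ} : ABStep (.ind n ρ γ) (.flag .var) (.tm (.var n) (n + 1) ρ γ)
  | lamS {t m ρ γ} : ABStep (.tm t (m + 1) ρ γ) (.flag .lam) (.tm (.lam t) m ρ γ)
  | lam0 {t ρ γ} : ABStep (.tm t 0 ρ γ) (.flag .lam) (.tm (.lam t) 0 ρ γ)
  | appfun {t m ρ γ} : ABStep (.tm t m ρ γ) (.flag .appfun) (.ind 0 ((t, m) :: ρ) γ)
  | appS {s m1 t m2 ρ γ} :
      ABStep (.tm s m1 ((t, m2) :: ρ) γ) (.flag .app) (.tm (.app t s) (max m1 m2) ρ γ)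
  | restart {t s e} :
      ABStep (.tm t 0 [] (.mk s e)) (.flag .done) (.ev s (.mk t [] :: e) [])

/-- Silent transitions of the AB machine. -/
def ABTau (C C' : ABConf) : Prop := ABStep C .tau C'

/-- Flagged transitions of the AB machine. -/
def ABFlagStep (C : ABConf) (F : ABFlag) (C' : ABConf) : Prop := ABStep C (.flag F) C'

/-! ### Statement 13: the AB machine generates every closed term -/

/-- The canonical flag sequence of a term (without the final `done`). -/
def FSeq' : DTm → List ABFlag
  | .var n => List.replicate n .suc ++ [.var]
  | .app t s => FSeq' t ++ [.appfun] ++ FSeq' s ++ [.app]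
  | .lam t => FSeq' t ++ [.lam]

/-- The canonical flag sequence of a term. -/
def FSeq (t : DTm) : List ABFlag := FSeq' t ++ [.done]

/-- A run of the AB machine through a given sequence of flagged transitions. -/
inductive FlagRun : ABConf → List ABFlag → ABConf → Prop
  | nil {C} : FlagRun C [] C
  | cons {C C' C'' F l} :
      ABStep C (.flag F) C' → FlagRun C' l C'' → FlagRun C (F :: l) C''

/-- The least `k` with `DClosedUnder k t`; it is the counter `m` of the term state the AB machine
reaches after generating `t`. -/
def DTm.openDepth : DTm → ℕ
  | .var n => n + 1
  | .lam t => t.openDepth - 1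
  | .app t s => max t.openDepth s.openDepth

theorem DTm.openDepth_le_of_closedUnder {k : ℕ} {t : DTm} (h : DClosedUnder k t) :
    t.openDepth ≤ k := by
  induction t generalizing k with
  | var n => exact h
  | lam t ih => have := ih h; simp only [DTm.openDepth]; omega
  | app t s iht ihs => exact max_le (iht h.1) (ihs h.2)

/-- `Lambda` and `Lambda0` in one rule, via truncated subtraction `0 - 1 = 0`. -/
theorem ABStep.lam_pred {t : DTm} {m : ℕ} {ρ : List (DTm × ℕ)} {γ : Clos} :
    ABStep (.tm t m ρ γ) (.flag .lam) (.tm (.lam t) (m - 1) ρ γ) := by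
  cases m with
  | zero => exact .lam0
  | succ m => exact .lamS

namespace FlagRun

theorem single {C C' : ABConf} {F : ABFlag} (h : ABStep C (.flag F) C') : FlagRun C [F] C' :=
  .cons h .nil

theorem append {C C' C'' : ABConf} {l l' : List ABFlag} (h : FlagRun C l C')
    (h' : FlagRun C' l' C'') : FlagRun C (l ++ l') C'' := by
  induction h with
  | nil => exact h'
  | cons s _ ih => exact .cons s (ih h')

theorem replicate_suc (n m : ℕ) (ρ : List (DTm × ℕ)) (γ : Clos) :
    FlagRun (.ind m ρ γ) (List.replicate n .suc) (.ind (m + n) ρ γ) := by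
  induction n generalizing m with
  | zero => exact .nil
  | succ n ih =>
    rw [show m + (n + 1) = m + 1 + n by omega]
    exact .cons .suc (ih (m + 1))

theorem fseq' (t : DTm) (ρ : List (DTm × ℕ)) (γ : Clos) :
    FlagRun (.ind 0 ρ γ) (FSeq' t) (.tm t t.openDepth ρ γ) := by
  induction t generalizing ρ with
  | var n =>
    simpa only [FSeq', DTm.openDepth, Nat.zero_add] using
      (replicate_suc n 0 ρ γ).append (single .var)
  | lam t ih => exact (ih ρ).append (single .lam_pred)
  | app t s iht ihs =>
    have hseq : FSeq' (.app t s) = FSeq' t ++ .appfun :: (FSeq' s ++ [.app]) := by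
      simp only [FSeq', List.append_assoc, List.cons_append, List.nil_append]
    rw [hseq, DTm.openDepth, max_comm]
    exact (iht ρ).append (.cons .appfun ((ihs _).append (single .appS)))

end FlagRun

/-- Every closed term `t'` is generated by the AB machine with its canonical
flag sequence: `<0 | <> | (t, e)>_ind -FSeq(t')-> <t | (t', <>)::e | []>`. -/
theorem ab_machine_generates_every_closed_term
    (t' : DTm) (h : DClosedUnder 0 t') (t : DTm) (e : List Clos) :
    FlagRun (.ind 0 [] (.mk t e)) (FSeq t') (.ev t (.mk t' [] :: e) []) := by
  have hdepth : t'.openDepth = 0 := Nat.le_zero.mp (DTm.openDepth_le_of_closedUnder h)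
  have hgen := FlagRun.fseq' t' [] (.mk t e)
  rw [hdepth] at hgen
  exact hgen.append (.single .restart)
end

section
/- Applicative bisimilarity coincides with machine bisimilarity of AB machines: for all closed closures (t, e) and (s, d), (t, e) ~app (s, d) if and only if <t | e | []> ~m <s | d | []>. -/
/-! ### Machine bisimilarity for flagged abstract machines -/

/-- Machine bisimulation for a flagged abstract machine given by silent steps
`tstep`, flagged steps `fstep`, and terminating flagged transitions `final`. -/
def IsMachineBisim {Conf Fl : Type} (tstep : Conf → Conf → Prop)
    (fstep : Conf → Fl → Conf → Prop) (final : Conf → Fl → Prop)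
    (R : Conf → Conf → Prop) : Prop :=
  Symmetric R ∧ ∀ C1 C2, R C1 C2 →
    (∀ (F : Fl) (C1' : Conf),
        (∃ C, Relation.ReflTransGen tstep C1 C ∧ fstep C F C1') →
        ∃ C2', (∃ C, Relation.ReflTransGen tstep C2 C ∧ fstep C F C2') ∧ R C1' C2') ∧
    (∀ F : Fl, (∃ C, Relation.ReflTransGen tstep C1 C ∧ final C F) →
        ∃ C, Relation.ReflTransGen tstep C2 C ∧ final C F)

/-- Machine bisimilarity: the largest machine bisimulation. -/
def MachineBisim {Conf Fl : Type} (tstep : Conf → Conf → Prop)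
    (fstep : Conf → Fl → Conf → Prop) (final : Conf → Fl → Prop)
    (C1 C2 : Conf) : Prop :=
  ∃ R, IsMachineBisim tstep fstep final R ∧ R C1 C2

/-! ### Statement 14: applicative bisimilarity coincides with machine bisimilarity -/

/-- Applicative bisimulation (a symmetric relation on closed closures). -/
def IsAppBisim (R : Clos → Clos → Prop) : Prop :=
  Symmetric R ∧ (∀ γ δ, R γ δ → ClosClosed γ ∧ ClosClosed δ) ∧
  ∀ t e s d, R (.mk t e) (.mk s d) →
    ∀ t' e', Relation.ReflTransGen ABTau (.ev t e []) (.ev (.lam t') e' []) →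
      ∃ s' d', Relation.ReflTransGen ABTau (.ev s d []) (.ev (.lam s') d' []) ∧
        ∀ t'' : DTm, DClosedUnder 0 t'' →
          R (.mk t' (.mk t'' [] :: e')) (.mk s' (.mk t'' [] :: d'))

/-- Applicative bisimilarity: the largest applicative bisimulation. -/
def AppBisim (γ δ : Clos) : Prop := ∃ R, IsAppBisim R ∧ R γ δ

/-- The AB machine has no terminating flagged transitions. -/
def ABFinal : ABConf → ABFlag → Prop := fun _ _ => False

/-!
An applicative bisimulation `R` yields a machine bisimulation: relate `<t | e | []>` and
`<s | d | []>` when `(t, e) R (s, d)`, and relate two argument-generation states when they carry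
the same partial term and application stack and their stored abstractions `(t', e')`, `(s', d')`
are related by `R` after every closed argument. Conversely, after the `arg` flag two machine
bisimilar machines sit in index mode, and the flag sequence generating a closed term `t''` is
determined by `t''` alone; since flagged steps are deterministic and index/term states have no
silent steps, bisimilarity survives this sequence and the final `done` step, which lands in
`<t' | (t'', <>) :: e' | []>` and `<s' | (t'', <>) :: d' | []>`.
-/

open Relation

section MachineBisim

variable {Conf Fl : Type} {tstep : Conf → Conf → Prop} {fstep : Conf → Fl → Conf → Prop}
  {final : Conf → Fl → Prop}

theorem isMachineBisim_machineBisim :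
    IsMachineBisim tstep fstep final (MachineBisim tstep fstep final) := by
  refine ⟨fun C1 C2 ⟨R, hR, h⟩ => ⟨R, hR, hR.1 h⟩, ?_⟩
  rintro C1 C2 ⟨R, hR, h⟩
  refine ⟨fun F C1' h1 => ?_, (hR.2 C1 C2 h).2⟩
  obtain ⟨C2', h2, h12⟩ := (hR.2 C1 C2 h).1 F C1' h1
  exact ⟨C2', h2, R, hR, h12⟩

theorem MachineBisim.flagStep {C1 C2 C1' C2' : Conf} {F : Fl}
    (h : MachineBisim tstep fstep final C1 C2) (hC2 : ∀ D, ¬ tstep C2 D)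
    (hdet : ∀ D D', fstep C2 F D → fstep C2 F D' → D = D')
    (h1 : fstep C1 F C1') (h2 : fstep C2 F C2') : MachineBisim tstep fstep final C1' C2' := by
  obtain ⟨R, hR, h12⟩ := h
  obtain ⟨C2'', ⟨C, hC, hf⟩, hR'⟩ := (hR.2 C1 C2 h12).1 F C1' ⟨C1, .refl, h1⟩
  rw [(reflTransGen_iff_eq hC2).1 hC] at hf
  exact hdet _ _ h2 hf ▸ ⟨R, hR, hR'⟩

end MachineBisim

abbrev ABBisim : ABConf → ABConf → Prop := MachineBisim ABTau ABFlagStep ABFinal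

theorem ABFlagStep.deterministic {C C1 C2 : ABConf} {F : ABFlag}
    (h1 : ABFlagStep C F C1) (h2 : ABFlagStep C F C2) : C1 = C2 := by
  cases h1 <;> cases h2 <;> rfl

theorem not_abTau_ind {n ρ γ C} : ¬ ABTau (.ind n ρ γ) C := nofun

theorem not_abTau_tm {t m ρ γ C} : ¬ ABTau (.tm t m ρ γ) C := nofun

theorem ABBisim.flagStep_ind {n ρ γ1 γ2 F C1' C2'} (h : ABBisim (.ind n ρ γ1) (.ind n ρ γ2))
    (h1 : ABFlagStep (.ind n ρ γ1) F C1') (h2 : ABFlagStep (.ind n ρ γ2) F C2') :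
    ABBisim C1' C2' :=
  MachineBisim.flagStep h (fun _ => not_abTau_ind) (fun _ _ => ABFlagStep.deterministic) h1 h2

theorem ABBisim.flagStep_tm {t m ρ γ1 γ2 F C1' C2'} (h : ABBisim (.tm t m ρ γ1) (.tm t m ρ γ2))
    (h1 : ABFlagStep (.tm t m ρ γ1) F C1') (h2 : ABFlagStep (.tm t m ρ γ2) F C2') :
    ABBisim C1' C2' :=
  MachineBisim.flagStep h (fun _ => not_abTau_tm) (fun _ _ => ABFlagStep.deterministic) h1 h2

theorem ABTau.exists_eq_ev {C C' : ABConf} (h : ABTau C C') : ∃ u e π, C' = .ev u e π := by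
  cases h <;> exact ⟨_, _, _, rfl⟩

theorem exists_eq_ev_of_reflTransGen_abTau {t e π C} (h : ReflTransGen ABTau (.ev t e π) C) :
    ∃ u e' π', C = .ev u e' π' := by
  induction h with
  | refl => exact ⟨_, _, _, rfl⟩
  | tail _ h _ => exact h.exists_eq_ev

theorem ABFlagStep.eq_arg_of_ev {u e π F C'} (h : ABFlagStep (.ev u e π) F C') :
    ∃ t', u = .lam t' ∧ π = [] ∧ F = .arg ∧ C' = .ind 0 [] (.mk t' e) := by
  cases h; exact ⟨_, rfl, rfl, rfl, rfl⟩

/-- The counter with which the AB machine's argument generation produces `t`. -/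
def DTm.level : DTm → ℕ
  | .var n => n + 1
  | .lam t => t.level - 1
  | .app t s => max s.level t.level

theorem DTm.dClosedUnder_iff_level_le (t : DTm) (k : ℕ) : DClosedUnder k t ↔ t.level ≤ k := by
  induction t generalizing k with
  | var n => simp [DClosedUnder, level]
  | lam t ih => simp only [DClosedUnder, level, ih]; omega
  | app t s iht ihs => simp only [DClosedUnder, level, iht, ihs, max_le_iff]; tauto

theorem DClosedUnder.mono {t : DTm} {k k' : ℕ} (h : DClosedUnder k t) (hk : k ≤ k') :
    DClosedUnder k' t := by
  rw [DTm.dClosedUnder_iff_level_le] at h ⊢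
  omega

theorem ABBisim.ind_of_ind_zero {ρ γ1 γ2} (h : ABBisim (.ind 0 ρ γ1) (.ind 0 ρ γ2)) (n : ℕ) :
    ABBisim (.ind n ρ γ1) (.ind n ρ γ2) := by
  induction n with
  | zero => exact h
  | succ n ih => exact ih.flagStep_ind .suc .suc

theorem ABBisim.generate (t : DTm) {ρ γ1 γ2} (h : ABBisim (.ind 0 ρ γ1) (.ind 0 ρ γ2)) :
    ABBisim (.tm t t.level ρ γ1) (.tm t t.level ρ γ2) := by
  induction t generalizing ρ with
  | var n => exact (h.ind_of_ind_zero n).flagStep_ind .var .var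
  | lam t ih =>
    have ht := ih h
    show ABBisim (.tm (.lam t) (t.level - 1) ρ γ1) (.tm (.lam t) (t.level - 1) ρ γ2)
    cases hlevel : t.level with
    | zero => rw [hlevel] at ht; exact ht.flagStep_tm .lam0 .lam0
    | succ m => rw [hlevel] at ht; exact ht.flagStep_tm .lamS .lamS
  | app t s iht ihs =>
    exact (ihs ((iht h).flagStep_tm .appfun .appfun)).flagStep_tm .appS .appS

theorem ABBisim.restart_of_arg {t' e' s' d' t''}
    (h : ABBisim (.ind 0 [] (.mk t' e')) (.ind 0 [] (.mk s' d'))) (ht'' : DClosedUnder 0 t'') :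
    ABBisim (.ev t' (.mk t'' [] :: e') []) (.ev s' (.mk t'' [] :: d') []) := by
  have hgen := h.generate t''
  rw [Nat.le_zero.mp ((t''.dClosedUnder_iff_level_le 0).1 ht'')] at hgen
  exact hgen.flagStep_tm .restart .restart

def EvClosed : ABConf → Prop
  | .ev t e π => DClosedUnder e.length t ∧ (∀ γ ∈ e, ClosClosed γ) ∧ (∀ γ ∈ π, ClosClosed γ)
  | _ => False

theorem ClosClosed.evClosed {t e} (h : ClosClosed (.mk t e)) : EvClosed (.ev t e []) := by
  cases h with
  | mk ht he => exact ⟨ht, he, by simp⟩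

theorem ABTau.evClosed {C C'} (h : ABTau C C') (hC : EvClosed C) : EvClosed C' := by
  cases h with
  | push =>
    obtain ⟨⟨ht, hs⟩, he, hπ⟩ := hC
    exact ⟨ht, he, List.forall_mem_cons.2 ⟨.mk hs he, hπ⟩⟩
  | zero =>
    obtain ⟨-, he, hπ⟩ := hC
    cases List.forall_mem_cons.1 he |>.1 with
    | mk ht he' => exact ⟨ht, he', hπ⟩
  | env =>
    obtain ⟨ht, he, hπ⟩ := hC
    refine ⟨?_, (List.forall_mem_cons.1 he).2, hπ⟩
    simp only [DClosedUnder, List.length_cons] at ht ⊢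
    omega
  | grab =>
    obtain ⟨ht, he, hπ⟩ := hC
    obtain ⟨hγ, hπ'⟩ := List.forall_mem_cons.1 hπ
    exact ⟨ht, List.forall_mem_cons.2 ⟨hγ, he⟩, hπ'⟩

theorem EvClosed.of_reflTransGen {C C'} (h : ReflTransGen ABTau C C') (hC : EvClosed C) :
    EvClosed C' := by
  induction h with
  | refl => exact hC
  | tail _ h ih => exact h.evClosed ih

theorem ClosClosed.apply_of_reflTransGen {t e t' e' t''} (h : ClosClosed (.mk t e))
    (hev : ReflTransGen ABTau (.ev t e []) (.ev (.lam t') e' [])) (ht'' : DClosedUnder 0 t'') :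
    ClosClosed (.mk t' (.mk t'' [] :: e')) := by
  obtain ⟨ht', he', -⟩ := EvClosed.of_reflTransGen hev h.evClosed
  exact .mk ht' (List.forall_mem_cons.2 ⟨.mk ht'' nofun, he'⟩)

/-- `R` relates the bodies of two abstraction closures after every closed argument. -/
def AppliedRel (R : Clos → Clos → Prop) : Clos → Clos → Prop
  | .mk t' e', .mk s' d' =>
    ∀ t'', DClosedUnder 0 t'' → R (.mk t' (.mk t'' [] :: e')) (.mk s' (.mk t'' [] :: d'))

theorem AppliedRel.symm {R : Clos → Clos → Prop} (hR : ∀ ⦃γ δ⦄, R γ δ → R δ γ) :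
    ∀ {γ δ : Clos}, AppliedRel R γ δ → AppliedRel R δ γ
  | .mk _ _, .mk _ _, h => fun t'' ht'' => hR (h t'' ht'')

/-- The machine bisimulation induced by an applicative bisimulation `R`; the side conditions on
`ρ` and `u` say that every generated subterm is closed under its counter. -/
inductive AppLift (R : Clos → Clos → Prop) : ABConf → ABConf → Prop
  | ev {t e s d} : R (.mk t e) (.mk s d) → AppLift R (.ev t e []) (.ev s d [])
  | ind {n ρ γ δ} : AppliedRel R γ δ → (∀ p ∈ ρ, DClosedUnder p.2 p.1) →
      AppLift R (.ind n ρ γ) (.ind n ρ δ)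
  | tm {u m ρ γ δ} : AppliedRel R γ δ → (∀ p ∈ ρ, DClosedUnder p.2 p.1) → DClosedUnder m u →
      AppLift R (.tm u m ρ γ) (.tm u m ρ δ)

def Transfer (R : ABConf → ABConf → Prop) (C1 C2 : ABConf) : Prop :=
  ∀ F C1', ABFlagStep C1 F C1' → ∃ C2', ABFlagStep C2 F C2' ∧ R C1' C2'

namespace AppLift

variable {R : Clos → Clos → Prop}

theorem symm (hR : ∀ ⦃γ δ⦄, R γ δ → R δ γ) {C1 C2 : ABConf} (h : AppLift R C1 C2) :
    AppLift R C2 C1 := by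
  rcases h with ⟨h⟩ | ⟨h, hρ⟩ | ⟨h, hρ, hu⟩
  · exact .ev (hR h)
  · exact .ind (h.symm hR) hρ
  · exact .tm (h.symm hR) hρ hu

theorem transfer_ind {n ρ γ δ} (h : AppliedRel R γ δ) (hρ : ∀ p ∈ ρ, DClosedUnder p.2 p.1) :
    Transfer (AppLift R) (.ind n ρ γ) (.ind n ρ δ) := by
  rintro F C1' (_ | _)
  · exact ⟨_, .suc, .ind h hρ⟩
  · exact ⟨_, .var, .tm h hρ (Nat.lt_succ_self _)⟩

theorem transfer_tm {u m ρ t' e' s' d'} (h : AppliedRel R (.mk t' e') (.mk s' d'))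
    (hρ : ∀ p ∈ ρ, DClosedUnder p.2 p.1) (hu : DClosedUnder m u) :
    Transfer (AppLift R) (.tm u m ρ (.mk t' e')) (.tm u m ρ (.mk s' d')) := by
  rintro F C1' (_ | _ | _ | _ | _)
  · exact ⟨_, .lamS, .tm h hρ hu⟩
  · exact ⟨_, .lam0, .tm h hρ (hu.mono (Nat.zero_le 1))⟩
  · exact ⟨_, .appfun, .ind h (List.forall_mem_cons.2 ⟨hu, hρ⟩)⟩
  · obtain ⟨ht₂, hρ'⟩ := List.forall_mem_cons.1 hρ
    exact ⟨_, .appS, .tm h hρ' ⟨ht₂.mono (le_max_right _ _), hu.mono (le_max_left _ _)⟩⟩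
  · exact ⟨_, .restart, .ev (h u hu)⟩

theorem isMachineBisim (hR : IsAppBisim R) :
    IsMachineBisim ABTau ABFlagStep ABFinal (AppLift R) := by
  obtain ⟨hsymm, -, happ⟩ := hR
  refine ⟨fun _ _ => symm hsymm, fun C1 C2 hC => ⟨?_, fun _ ⟨_, _, hfin⟩ => hfin.elim⟩⟩
  rintro F C1' ⟨C, hC1, hf⟩
  cases hC with
  | @ev t e s d h =>
    obtain ⟨u, e₁, π, rfl⟩ := exists_eq_ev_of_reflTransGen_abTau hC1
    obtain ⟨t', rfl, rfl, rfl, rfl⟩ := hf.eq_arg_of_ev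
    obtain ⟨s', d', hC2, hR'⟩ := happ t e s d h t' e₁ hC1
    exact ⟨_, ⟨_, hC2, .arg⟩, .ind hR' nofun⟩
  | ind h hρ =>
    rw [(reflTransGen_iff_eq fun _ => not_abTau_ind).1 hC1] at hf
    obtain ⟨C2', hf2, hR'⟩ := transfer_ind h hρ F C1' hf
    exact ⟨C2', ⟨_, .refl, hf2⟩, hR'⟩
  | @tm _ _ _ γ δ h hρ hu =>
    cases γ; cases δ
    rw [(reflTransGen_iff_eq fun _ => not_abTau_tm).1 hC1] at hf
    obtain ⟨C2', hf2, hR'⟩ := transfer_tm h hρ hu F C1' hf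
    exact ⟨C2', ⟨_, .refl, hf2⟩, hR'⟩

end AppLift

def ClosedABBisim : Clos → Clos → Prop
  | .mk t e, .mk s d =>
    ClosClosed (.mk t e) ∧ ClosClosed (.mk s d) ∧ ABBisim (.ev t e []) (.ev s d [])

theorem isAppBisim_closedABBisim : IsAppBisim ClosedABBisim := by
  refine ⟨?_, ?_, ?_⟩
  · rintro ⟨t, e⟩ ⟨s, d⟩ ⟨ht, hs, h⟩
    exact ⟨hs, ht, isMachineBisim_machineBisim.1 h⟩
  · rintro ⟨t, e⟩ ⟨s, d⟩ ⟨ht, hs, -⟩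
    exact ⟨ht, hs⟩
  rintro t e s d ⟨ht, hs, R, hR, h⟩ t' e' hev
  obtain ⟨C2', ⟨C, hC2, hf⟩, hR'⟩ := (hR.2 _ _ h).1 .arg _ ⟨_, hev, .arg⟩
  obtain ⟨u, d', π, rfl⟩ := exists_eq_ev_of_reflTransGen_abTau hC2
  obtain ⟨s', rfl, rfl, -, rfl⟩ := hf.eq_arg_of_ev
  exact ⟨s', d', hC2, fun t'' ht'' => ⟨ht.apply_of_reflTransGen hev ht'',
    hs.apply_of_reflTransGen hC2 ht'', ABBisim.restart_of_arg ⟨R, hR, hR'⟩ ht''⟩⟩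

/-- For closed closures, `(t, e) ~app (s, d)` iff `<t | e | []> ~m <s | d | []>`. -/
theorem app_bisim_iff_machine_bisim (t s : DTm) (e d : List Clos)
    (ht : ClosClosed (.mk t e)) (hs : ClosClosed (.mk s d)) :
    AppBisim (.mk t e) (.mk s d) ↔
      MachineBisim ABTau ABFlagStep ABFinal (.ev t e []) (.ev s d []) :=
  ⟨fun ⟨R, hR, h⟩ => ⟨AppLift R, AppLift.isMachineBisim hR, .ev h⟩,
    fun h => ⟨ClosedABBisim, isAppBisim_closedABBisim, ht, hs, h⟩⟩
end
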